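/- Let s ∈ ℂ with Re(s) > 1, c > 0, d ∈ ℝ, z = x+iy ∈ ℍ, and n ∈ ℤ. Then ∫_{−∞}^{∞} (cx+ct+d)/|cz+ct+d|^{2s+4} · e(−nt) dt = −2i · e(nx + nd/c) · c^{−2s−3} · y^{−2s−2} · ∫_{0}^{∞} t·(t²+1)^{−(s+2)} · sin(2πnyt) dt. -/

import Mathlib

open Complex MeasureTheory
open scoped Real

noncomputable section

abbrev SL2Z := Matrix.SpecialLinearGroup (Fin 2) ℤ
abbrev SL2R := Matrix.SpecialLinearGroup (Fin 2) ℝ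

/-- Entrywise coercion `SL(2,ℤ) → SL(2,ℝ)`. -/
def toSL (g : SL2Z) : SL2R := Matrix.SpecialLinearGroup.map (Int.castRingHom ℝ) g

/-- Möbius action of `SL(2,ℝ)` on `ℂ`. -/
def moeb (γ : SL2R) (z : ℂ) : ℂ :=
  ((γ.1 0 0 : ℝ) * z + (γ.1 0 1 : ℝ)) / ((γ.1 1 0 : ℝ) * z + (γ.1 1 1 : ℝ))

/-- Automorphy factor `cz + d`. -/
def denom (γ : SL2R) (z : ℂ) : ℂ := (γ.1 1 0 : ℝ) * z + (γ.1 1 1 : ℝ)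

/-- Action of `SL(2,ℝ)` on the tangent bundle: `γ·(z,v) = (γz, v/(cz+d)²)`. -/
def tact (γ : SL2R) (p : ℂ × ℂ) : ℂ × ℂ := (moeb γ p.1, p.2 / (denom γ p.1) ^ 2)

/-- The 1-form `α¹(z,v) = (Im z)^s · Re v`. -/
def alpha1 (s : ℂ) (p : ℂ × ℂ) : ℂ := (p.1.im : ℂ) ^ s * (p.2.re : ℂ)

/-- Unit hyperbolic tangent vector at `z` with angle `θ`: `Im(z)·i·e^{iθ}`. -/
def uvec (z : ℂ) (θ : ℝ) : ℂ := (z.im : ℂ) * I * Complex.exp (I * (θ : ℂ))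

/-- `e(w) = exp(2πiw)`. -/
def ee (w : ℂ) : ℂ := Complex.exp (2 * (π : ℂ) * I * w)

/-- The translation matrix `T = [[1,1],[0,1]]`. -/
def T : SL2Z := ⟨!![1, 1; 0, 1], by norm_num [Matrix.det_fin_two_of]⟩

/-- The stabilizer `Γ_∞ = ⟨T⟩` of the cusp `∞` in `SL(2,ℤ)`. -/
def Gammainf : Subgroup SL2Z := Subgroup.zpowers T

/-- The 1-form Eisenstein series `E¹((z,v),s) = Σ_{γ ∈ Γ_∞\Γ} α¹(γ·(z,v))`. -/
def E1 (s : ℂ) (p : ℂ × ℂ) : ℂ :=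
  ∑' q : Quotient (QuotientGroup.rightRel Gammainf), alpha1 s (tact (toSL q.out) p)

/-- Modified Bessel function of the second kind `K_ν(x) = ∫_0^∞ e^{-x cosh t} cosh(νt) dt`. -/
def Kbessel (ν : ℂ) (x : ℝ) : ℂ :=
  ∫ t in Set.Ioi (0 : ℝ), Complex.exp (-(x : ℂ) * (Real.cosh t : ℂ)) * Complex.cosh (ν * (t : ℂ))

/-- `φ(s) = √π Γ(s-1/2) ζ(2s-1) / (Γ(s) ζ(2s))`. -/
def phi0 (s : ℂ) : ℂ :=
  (Real.sqrt π : ℂ) * Complex.Gamma (s - 1/2) * riemannZeta (2*s - 1) /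
    (Complex.Gamma s * riemannZeta (2*s))

/-- `φ(n,s) = ζ(2s)⁻¹ Σ_{d | |n|} d^{1-2s}`. -/
def phin (n : ℤ) (s : ℂ) : ℂ :=
  (riemannZeta (2*s))⁻¹ * ∑ d ∈ n.natAbs.divisors, (d : ℂ) ^ ((1 : ℂ) - 2*s)

/-- `φ₁(n,s) = Σ_{c≥1} c^{-2s-2} Σ_{0≤d<c, gcd(d,c)=1} cos(2πnd/c)`. -/
def phi1 (n : ℤ) (s : ℂ) : ℂ :=
  ∑' c : ℕ+, ((c : ℝ) : ℂ) ^ (-2*s - 2) *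
    ∑ d ∈ (Finset.range (c : ℕ)).filter (fun d => Nat.gcd d (c : ℕ) = 1),
      (Real.cos (2*π*(n : ℝ)*(d : ℝ)/(c : ℝ)) : ℂ)

/-- `φ₂(n,s) = Σ_{c≥1} c^{-2s-2} Σ_{0≤d<c, gcd(d,c)=1} sin(2πnd/c)`. -/
def phi2 (n : ℤ) (s : ℂ) : ℂ :=
  ∑' c : ℕ+, ((c : ℝ) : ℂ) ^ (-2*s - 2) *
    ∑ d ∈ (Finset.range (c : ℕ)).filter (fun d => Nat.gcd d (c : ℕ) = 1),
      (Real.sin (2*π*(n : ℝ)*(d : ℝ)/(c : ℝ)) : ℂ)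

/-!
Write `β = s + 2`. Since `|cz + ct + d|² = (cx + ct + d)² + (cy)²`, the substitution
`u = (t + x + d/c) / y` turns the integrand into
`e(nx + nd/c) · (cy)^{1-2β} · u (u² + 1)^{-β} · e(-nyu)`, with `dt = y du`.
The factor `u (u² + 1)^{-β}` is odd and integrable for `Re β > 1`, so folding the line onto
`(0, ∞)` keeps only `e(-nyu) - e(nyu) = -2i sin(2πnyu)`.
-/

lemma ofReal_cpow_two_mul {b : ℝ} (hb : 0 ≤ b) (w : ℂ) :
    (b : ℂ) ^ (2 * w) = ((b ^ 2 : ℝ) : ℂ) ^ w := by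
  rw [← Real.rpow_two, ← cpow_mul_ofReal_nonneg hb]
  norm_num

lemma ofReal_norm_cpow_two_mul (a b : ℝ) (w : ℂ) :
    ((‖(a : ℂ) + b * I‖ : ℝ) : ℂ) ^ (2 * w) = ((a ^ 2 + b ^ 2 : ℝ) : ℂ) ^ w := by
  rw [ofReal_cpow_two_mul (norm_nonneg _), Complex.sq_norm, normSq_add_mul_I]

lemma mul_sq_add_sq_cpow_neg {Y : ℝ} (hY : 0 < Y) (v : ℝ) (β : ℂ) :
    (v : ℂ) * ((v ^ 2 + Y ^ 2 : ℝ) : ℂ) ^ (-β) =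
      (Y : ℂ) ^ (1 - 2 * β) * (((v / Y : ℝ) : ℂ) * (((v / Y) ^ 2 + 1 : ℝ) : ℂ) ^ (-β)) := by
  have hY' : (Y : ℂ) ≠ 0 := ofReal_ne_zero.2 hY.ne'
  rw [show v ^ 2 + Y ^ 2 = Y ^ 2 * ((v / Y) ^ 2 + 1) by field_simp,
    ofReal_mul, mul_cpow_ofReal_nonneg (sq_nonneg Y) (by positivity), ← ofReal_cpow_two_mul hY.le,
    show 1 - 2 * β = 1 + 2 * -β by ring, cpow_add _ _ hY', cpow_one, ofReal_div]
  field_simp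

lemma integrable_mul_sq_add_one_cpow_neg {β : ℂ} (hβ : 1 < β.re) :
    Integrable fun t : ℝ => (t : ℂ) * ((t ^ 2 + 1 : ℝ) : ℂ) ^ (-β) := by
  have hpos (t : ℝ) : 0 < t ^ 2 + 1 := by positivity
  have hmeas : Continuous fun t : ℝ => (t : ℂ) * ((t ^ 2 + 1 : ℝ) : ℂ) ^ (-β) :=
    continuous_ofReal.mul <| (continuous_ofReal.comp (by fun_prop)).cpow continuous_const
      fun t => ofReal_mem_slitPlane.2 (hpos t)
  refine (integrable_rpow_neg_one_add_norm_sq (E := ℝ) (r := 2 * β.re - 1)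
    (by simp; linarith)).mono hmeas.aestronglyMeasurable (.of_forall fun t => ?_)
  have hsqrt : |t| ≤ (1 + t ^ 2) ^ (1 / 2 : ℝ) := by
    rw [← Real.sqrt_eq_rpow, ← Real.sqrt_sq_eq_abs]
    exact Real.sqrt_le_sqrt (by linarith)
  have hbound : ‖(1 + ‖t‖ ^ 2) ^ (-(2 * β.re - 1) / 2)‖ =
      (1 + t ^ 2) ^ (1 / 2 : ℝ) * (t ^ 2 + 1) ^ (-β).re := by
    rw [Real.norm_eq_abs, Real.norm_eq_abs, sq_abs, abs_of_nonneg (by positivity),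
      add_comm 1 (t ^ 2), ← Real.rpow_add (hpos t)]
    congr 1
    simp only [neg_re]
    ring
  rw [hbound, norm_mul, norm_cpow_eq_rpow_re_of_pos (hpos t), norm_real, Real.norm_eq_abs]
  gcongr

lemma ee_add (w w' : ℂ) : ee (w + w') = ee w * ee w' := by
  rw [ee, ee, ee, mul_add, exp_add]

lemma ee_neg_sub_ee (w : ℂ) : ee (-w) - ee w = -2 * I * Complex.sin (2 * π * w) := by
  rw [ee, ee, show 2 * π * I * -w = -(2 * π * w) * I by ring,
    show 2 * π * I * w = 2 * π * w * I by ring, exp_mul_I, exp_mul_I, cos_neg, sin_neg]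
  ring

lemma integral_comp_add_div {E : Type*} [NormedAddCommGroup E] [NormedSpace ℝ E]
    (g : ℝ → E) (b y : ℝ) : ∫ t, g ((t + b) / y) = |y| • ∫ u, g u :=
  (integral_add_right_eq_self (fun t => g (t / y)) b).trans (Measure.integral_comp_div g y)

lemma integral_eq_integral_Ioi_add_comp_neg {E : Type*} [NormedAddCommGroup E]
    [NormedSpace ℝ E] {g : ℝ → E} (hg : Integrable g) :
    ∫ t, g t = ∫ t in Set.Ioi 0, (g t + g (-t)) := by
  rw [integral_add hg.integrableOn hg.comp_neg.integrableOn, integral_comp_neg_Ioi, neg_zero,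
    ← intervalIntegral.integral_Iic_add_Ioi hg.integrableOn hg.integrableOn, add_comm]

lemma integral_mul_ee_of_odd {f : ℝ → ℂ} (hf : Integrable f) (hodd : ∀ t, f (-t) = -f t)
    (a : ℝ) :
    ∫ t : ℝ, f t * ee (-(a : ℂ) * t) =
      -2 * I * ∫ t in Set.Ioi 0, f t * (Real.sin (2 * π * a * t) : ℂ) := by
  have hint : Integrable fun t : ℝ => f t * ee (-(a : ℂ) * t) := by
    refine hf.mul_bdd (c := 1) (by unfold ee; fun_prop) (.of_forall fun t => ?_)
    rw [ee, norm_exp]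
    simp
  rw [integral_eq_integral_Ioi_add_comp_neg hint, ← integral_const_mul]
  congr 1 with t
  simp only [hodd, ofReal_neg, mul_neg, neg_mul, neg_neg, ← sub_eq_add_neg]
  rw [← mul_sub, ee_neg_sub_ee]
  push_cast
  rw [mul_assoc (2 * (π : ℂ))]
  ring

lemma div_norm_cpow_mul_ee_eq (s : ℂ) {c y : ℝ} (hc : 0 < c) (hy : 0 < y) (a d x t : ℝ) :
    ((c * x + c * t + d : ℝ) : ℂ) / ((‖c * (x + y * I) + c * t + d‖ : ℝ) : ℂ) ^ (2 * s + 4) *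
        ee (-a * t) =
      ee (a * x + a * d / c) * ((c * y : ℝ) : ℂ) ^ (1 - 2 * (s + 2)) *
        ((((t + (x + d / c)) / y : ℝ) : ℂ) *
          ((((t + (x + d / c)) / y) ^ 2 + 1 : ℝ) : ℂ) ^ (-(s + 2)) *
          ee (-((a * y : ℝ) : ℂ) * ((t + (x + d / c)) / y : ℝ))) := by
  have hnorm :
      c * (x + y * I) + c * t + d = ((c * x + c * t + d : ℝ) : ℂ) + ((c * y : ℝ) : ℂ) * I := by
    push_cast; ring
  have hscale : (c * x + c * t + d) / (c * y) = (t + (x + d / c)) / y := by field_simp; ring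
  have hphase : ee (-a * t) =
      ee (a * x + a * d / c) * ee (-((a * y : ℝ) : ℂ) * ((t + (x + d / c)) / y : ℝ)) := by
    have hy' : (y : ℂ) ≠ 0 := ofReal_ne_zero.2 hy.ne'
    rw [← ee_add]
    congr 1
    push_cast
    field_simp
    ring
  rw [hnorm, show 2 * s + 4 = 2 * (s + 2) by ring, ofReal_norm_cpow_two_mul, div_eq_mul_inv,
    ← cpow_neg, mul_sq_add_sq_cpow_neg (mul_pos hc hy), hscale, hphase]
  ring

/-- Third integral simplification in the Fourier coefficient computation. -/
theorem stmt9 (s : ℂ) (hs : 1 < s.re) (c d x y : ℝ) (hc : 0 < c) (hy : 0 < y) (n : ℤ) :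
    (∫ t : ℝ, ((c*x + c*t + d : ℝ) : ℂ) /
        ((‖(c : ℂ) * ((x : ℂ) + (y : ℂ) * I) + (c : ℂ) * (t : ℂ) + (d : ℂ)‖ : ℝ) : ℂ) ^ (2*s + 4) *
        ee (-(n : ℂ) * (t : ℂ))) =
      -2 * I * ee ((n : ℂ) * (x : ℂ) + (n : ℂ) * (d : ℂ) / (c : ℂ)) * ((c : ℂ)) ^ (-2*s - 3) *
        ((y : ℂ)) ^ (-2*s - 2) *
        ∫ t in Set.Ioi (0 : ℝ), (t : ℂ) * ((t^2 + 1 : ℝ) : ℂ) ^ (-(s + 2)) *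
          (Real.sin (2*π*(n : ℝ)*y*t) : ℂ) := by
  rw [show (n : ℂ) = ((n : ℝ) : ℂ) by push_cast; rfl]
  set C := ee ((n : ℝ) * (x : ℂ) + (n : ℝ) * (d : ℂ) / (c : ℂ)) *
    ((c * y : ℝ) : ℂ) ^ (1 - 2 * (s + 2))
  set F : ℝ → ℂ := fun u => (u : ℂ) * ((u ^ 2 + 1 : ℝ) : ℂ) ^ (-(s + 2))
  have hodd (u : ℝ) : F (-u) = -F u := by simp only [F, neg_sq, ofReal_neg, neg_mul]
  calc _ = ∫ t : ℝ, C * (F ((t + (x + d / c)) / y) *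
          ee (-((n * y : ℝ) : ℂ) * ((t + (x + d / c)) / y : ℝ))) :=
        integral_congr_ae (.of_forall (div_norm_cpow_mul_ee_eq s hc hy n d x))
    _ = C * y * (-2 * I * ∫ u in Set.Ioi 0, F u * (Real.sin (2 * π * (n * y) * u) : ℂ)) := by
      rw [integral_const_mul,
        integral_comp_add_div (fun u => F u * ee (-((n * y : ℝ) : ℂ) * u)), abs_of_pos hy,
        real_smul, integral_mul_ee_of_odd
          (integrable_mul_sq_add_one_cpow_neg (by simp; linarith)) hodd, mul_assoc C]
    _ = _ := by
      simp only [C, F, ← mul_assoc (2 * π) (n : ℝ) y]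
      rw [ofReal_mul, mul_cpow_ofReal_nonneg hc.le hy.le,
        show -2 * s - 2 = 1 - 2 * (s + 2) + 1 by ring, cpow_add _ _ (ofReal_ne_zero.2 hy.ne'),
        cpow_one, show 1 - 2 * (s + 2) = -2 * s - 3 by ring]
      ring

end
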